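/- (Large gap case.) Assume μ_1 ≥ μ_2 and condition on the intersection W of the four good events W1–W4 of the three-level policy. If the gap Δ = μ_1 − μ_2 satisfies Δ ≥ 4·Σ_{a∈{1,2}} √(log(T)/(q_a·T1)), then all agents in the second and third levels pull arm 1. -/

import Mathlib

open MeasureTheory ProbabilityTheory

noncomputable section

namespace IncExp

/-- Number of pulls of arm `a` among the rounds in `S`. -/
def pullCount {Ω : Type} {K : ℕ} (A : ℕ → Ω → Fin K) (S : Finset ℕ) (a : Fin K) (ω : Ω) : ℕ :=
  (S.filter fun s => A s ω = a).card

/-- Empirical mean reward of arm `a` among the rounds in `S`. -/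
def empMean {Ω : Type} {K : ℕ} (A : ℕ → Ω → Fin K) (r : ℕ → Ω → ℝ)
    (S : Finset ℕ) (a : Fin K) (ω : Ω) : ℝ :=
  (∑ s ∈ S.filter (fun s => A s ω = a), r s ω) / (pullCount A S a ω : ℝ)

/-- Index of round `t` among the pulls of arm `a` within the rounds `S`:
the number of pulls of `a` in `S` strictly before round `t`. -/
def idxIn {Ω : Type} {K : ℕ} (A : ℕ → Ω → Fin K) (S : Finset ℕ) (a : Fin K) (ω : Ω) (t : ℕ) : ℕ :=
  pullCount A (S.filter fun s => s < t) a ω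

/-- The rounds of `S` carrying the `m`-th (inclusive) through `n`-th (exclusive)
pulls of arm `a` within `S`. -/
def window {Ω : Type} {K : ℕ} (A : ℕ → Ω → Fin K) (S : Finset ℕ) (a : Fin K) (ω : Ω)
    (m n : ℕ) : Finset ℕ :=
  S.filter fun t => A t ω = a ∧ m ≤ idxIn A S a ω t ∧ idxIn A S a ω t < n

/-- The rounds of `S` carrying the first `n` pulls of arm `a` within `S`. -/
def firstPulls {Ω : Type} {K : ℕ} (A : ℕ → Ω → Fin K) (S : Finset ℕ) (a : Fin K) (ω : Ω)
    (n : ℕ) : Finset ℕ :=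
  window A S a ω 0 n

/-- Average reward over a set `W` of rounds. -/
def meanOver {Ω : Type} (r : ℕ → Ω → ℝ) (W : Finset ℕ) (ω : Ω) : ℝ :=
  (∑ t ∈ W, r t ω) / (W.card : ℝ)

/-- An execution of the social-learning bandit process with `K` arms, `T` rounds,
an order-based disclosure policy given by the observation sets `obs`, and agents
responding according to Assumption 1 (with constants `Nest` and `C_est = 1/16`).
Rewards are Bernoulli, read off an i.i.d. reward tape. -/
structure Execution (Ω : Type) [MeasureSpace Ω] (K T Nest : ℕ) where
  /-- the mean rewards -/
  μ : Fin K → ℝ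
  μ_mem : ∀ a, μ a ∈ Set.Icc (1/3 : ℝ) (2/3 : ℝ)
  /-- the subset of past rounds disclosed to agent `t` (fixed in advance) -/
  obs : ℕ → Finset ℕ
  obs_lt : ∀ t, ∀ s ∈ obs t, s < t
  /-- the arm pulled by agent `t` -/
  A : ℕ → Ω → Fin K
  A_meas : ∀ t, Measurable (A t)
  /-- the reward collected at round `t` -/
  r : ℕ → Ω → ℝ
  /-- the reward tape: cell `(a, j)` is the reward of the `j`-th pull of arm `a` -/
  tape : Fin K → ℕ → Ω → ℝ
  tape_meas : ∀ a j, Measurable (tape a j)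
  tape01 : ∀ a j ω, tape a j ω = 0 ∨ tape a j ω = 1
  tape_dist : ∀ a j, volume {ω | tape a j ω = 1} = ENNReal.ofReal (μ a)
  tape_indep : iIndepFun
    (fun p : Fin K × ℕ => fun ω => tape p.1 p.2 ω) volume
  r_eq : ∀ t ω, r t ω = tape (A t ω) (pullCount A (Finset.range t) (A t ω) ω) ω
  /-- the reward estimates formed by agent `t` -/
  est : ℕ → Fin K → Ω → ℝ
  est_close : ∀ t a ω, Nest ≤ pullCount A (obs t) a ω →
      |est t a ω - empMean A r (obs t) a ω| < (1/16 : ℝ) / Real.sqrt (pullCount A (obs t) a ω)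
  est_zero : ∀ t a ω, pullCount A (obs t) a ω = 0 → (1/3 : ℝ) ≤ est t a ω
  /-- each agent pulls an arm maximizing its estimate -/
  A_max : ∀ t ω a, est t a ω ≤ est t (A t ω) ω

/-- Regret of an execution. -/
def regret {Ω : Type} [MeasureSpace Ω] {K T Nest : ℕ} (e : Execution Ω K T Nest) : ℝ :=
  (T : ℝ) * (⨆ a, e.μ a) - ∑ t ∈ Finset.range T, ∫ ω, e.μ (e.A t ω)

/-- `S` is a full-disclosure path: every agent in `S` observes exactly the full
history of the preceding rounds of `S`. -/
def IsFDPath (obs : ℕ → Finset ℕ) (S : Finset ℕ) : Prop :=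
  ∀ t ∈ S, obs t = S.filter fun s => s < t

/-- The `s`-th first-level group of the three-level policy: `T1` full-disclosure
paths of `Lfdp` rounds each. -/
def grp (T1 Lfdp s : ℕ) : Finset ℕ :=
  Finset.Ico (s * T1 * Lfdp) ((s + 1) * T1 * Lfdp)

/-- The three-level policy with parameters `σ, T1, T2, Lfdp`:
level 1 consists of `σ` groups of `T1` full-disclosure paths of length `Lfdp` each;
level 2 consists of `σ` groups of `T2` agents, each agent of the `s`-th second-level
group observing exactly the history of the `s`-th first-level group;
every agent of level 3 (all remaining rounds) observes exactly the full history of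
the first two levels. -/
def ThreeLevel (obs : ℕ → Finset ℕ) (σ T1 T2 Lfdp : ℕ) : Prop :=
  (∀ j < σ * T1, IsFDPath obs (Finset.Ico (j * Lfdp) ((j + 1) * Lfdp))) ∧
  (∀ s < σ, ∀ t ∈ Finset.Ico (σ * T1 * Lfdp + s * T2) (σ * T1 * Lfdp + (s + 1) * T2),
      obs t = grp T1 Lfdp s) ∧
  (∀ t, σ * T1 * Lfdp + σ * T2 ≤ t → obs t = Finset.range (σ * T1 * Lfdp + σ * T2))

/-- The parameter `σ = 2^10 * log T` of the three-level policy. -/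
def sigT (T : ℕ) : ℕ := ⌈(2:ℝ)^(10:ℕ) * Real.log T⌉₊

/-- The parameter `T1 = T^(4/7) * (log T)^(-1/7)` of the three-level policy. -/
def T1of (T : ℕ) : ℕ := ⌈(T : ℝ) ^ ((4:ℝ)/7) * (Real.log T) ^ (-(1:ℝ)/7)⌉₊

/-- The parameter `T2 = T^(6/7) * (log T)^(-5/7)` of the three-level policy. -/
def T2of (T : ℕ) : ℕ := ⌈(T : ℝ) ^ ((6:ℝ)/7) * (Real.log T) ^ (-(5:ℝ)/7)⌉₊

/-!
An agent of the second level observes a whole first-level group, and an agent of the third level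
observes a superset of the first group. By W1, once `T1 ≫ log T`, each arm `a` is pulled at least
`q a * T1 / 2` times in what the agent observes, and the rewards of those pulls are a prefix of the
group's tape (resp. of the global tape). So W2 (resp. W4) puts each empirical mean within
`2 √(log T / (q a * T1))` of `μ a`; Assumption 1 adds at most a sixteenth of that, and the gap
`4 Σₐ √(log T / (q a * T1))` then exceeds the sum of the two estimation errors.
-/

open Filter Finset Real

section Reindexing

variable {Ω : Type} {K : ℕ} (A : ℕ → Ω → Fin K) (S : Finset ℕ) (a : Fin K) (ω : Ω)

lemma pullCount_mono {S₁ S₂ : Finset ℕ} (h : S₁ ⊆ S₂) :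
    pullCount A S₁ a ω ≤ pullCount A S₂ a ω :=
  card_le_card (filter_subset_filter _ h)

lemma pullCount_lt_pullCount {S₁ S₂ : Finset ℕ} {t : ℕ} (h : S₁ ⊆ S₂) (ht : t ∈ S₂) (htS : t ∉ S₁)
    (ha : A t ω = a) : pullCount A S₁ a ω < pullCount A S₂ a ω :=
  card_lt_card <| (ssubset_iff_of_subset (filter_subset_filter _ h)).2
    ⟨t, mem_filter.2 ⟨ht, ha⟩, fun h' => htS (mem_filter.1 h').1⟩

lemma idxIn_lt_pullCount {t : ℕ} (ht : t ∈ S) (ha : A t ω = a) :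
    idxIn A S a ω t < pullCount A S a ω :=
  pullCount_lt_pullCount A a ω (filter_subset _ _) ht (by simp) ha

lemma strictMonoOn_idxIn : StrictMonoOn (idxIn A S a ω) ↑(S.filter fun t => A t ω = a) := by
  intro t ht t' _ htt'
  obtain ⟨htS, ha⟩ := mem_filter.1 ht
  refine pullCount_lt_pullCount A a ω (fun s hs => ?_) (mem_filter.2 ⟨htS, htt'⟩) (by simp) ha
  simp only [mem_filter] at hs ⊢
  exact ⟨hs.1, hs.2.trans htt'⟩

lemma image_idxIn :
    (S.filter fun t => A t ω = a).image (idxIn A S a ω) = range (pullCount A S a ω) := by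
  refine eq_of_subset_of_card_le (fun j hj => ?_) ?_
  · obtain ⟨t, ht, rfl⟩ := mem_image.1 hj
    exact mem_range.2 (idxIn_lt_pullCount A S a ω (mem_filter.1 ht).1 (mem_filter.1 ht).2)
  · rw [card_range, card_image_of_injOn (strictMonoOn_idxIn A S a ω).injOn]
    rfl

lemma sum_filter_idxIn (g : ℕ → ℝ) :
    ∑ t ∈ S.filter (fun t => A t ω = a), g (idxIn A S a ω t)
      = ∑ j ∈ range (pullCount A S a ω), g j := by
  rw [← image_idxIn A S a ω, sum_image (strictMonoOn_idxIn A S a ω).injOn]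

lemma empMean_eq_of_tape (r : ℕ → Ω → ℝ) (g : ℕ → ℝ)
    (hr : ∀ t ∈ S, A t ω = a → r t ω = g (idxIn A S a ω t)) :
    empMean A r S a ω = (∑ j ∈ range (pullCount A S a ω), g j) / pullCount A S a ω := by
  rw [empMean, ← sum_filter_idxIn A S a ω g]
  congr 1
  exact sum_congr rfl fun t ht => hr t (mem_filter.1 ht).1 (mem_filter.1 ht).2

lemma idxIn_range {M t : ℕ} (ht : t ≤ M) :
    idxIn A (range M) a ω t = pullCount A (range t) a ω := by
  rw [idxIn, show (range M).filter (· < t) = range t by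
    ext; simp only [mem_filter, mem_range]; omega]

end Reindexing

lemma abs_avg_range_sub_le {T N : ℕ} {g : ℕ → ℝ} {μ L : ℝ}
    (hW : ∀ τ1 τ2 : ℕ, τ1 ≤ τ2 → τ2 < T →
      |(∑ j ∈ Icc τ1 τ2, g j) / ((τ2 - τ1 + 1 : ℕ) : ℝ) - μ|
        ≤ √(2 * L / ((τ2 - τ1 + 1 : ℕ) : ℝ)))
    (hN : 0 < N) (hNT : N ≤ T) :
    |(∑ j ∈ range N, g j) / N - μ| ≤ √(2 * L / N) := by
  have h := hW 0 (N - 1) (Nat.zero_le _) (by omega)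
  rwa [show Icc 0 (N - 1) = range N by ext; simp; omega, show N - 1 - 0 + 1 = N by omega] at h

lemma exists_mem_Ico_add_mul {b n d t : ℕ} (hbt : b ≤ t) (htn : t < b + n * d) :
    ∃ s < n, t ∈ Ico (b + s * d) (b + (s + 1) * d) := by
  have hd : 0 < d := Nat.pos_of_ne_zero fun h => by simp [h] at htn; omega
  refine ⟨(t - b) / d, (Nat.div_lt_iff_lt_mul hd).2 (by omega), mem_Ico.2 ⟨?_, ?_⟩⟩
  · have := Nat.div_mul_le_self (t - b) d
    omega
  · have := Nat.lt_div_mul_add (a := t - b) hd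
    rw [add_mul, one_mul]
    omega

lemma card_grp (T1 Lfdp s : ℕ) : (grp T1 Lfdp s).card = T1 * Lfdp := by
  rw [grp, Nat.card_Ico, add_mul, add_mul, one_mul, Nat.add_sub_cancel_left]

lemma grp_subset_range {σ T1 Lfdp s : ℕ} (hs : s < σ) :
    grp T1 Lfdp s ⊆ range (σ * T1 * Lfdp) :=
  fun _ hx => mem_range.2 <| (mem_Ico.1 hx).2.trans_le <|
    Nat.mul_le_mul_right _ (Nat.mul_le_mul_right _ hs)

lemma sigT_pos {T : ℕ} (h : 0 < log T) : 0 < sigT T :=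
  Nat.ceil_pos.2 (by positivity)

lemma div_sqrt_add_sqrt_le {N m L : ℝ} (hm : 0 < m) (hN : m / 2 ≤ N) (hL : 1 ≤ L) :
    1 / 16 / √N + √(2 * L / N) ≤ 3 * √(L / m) := by
  have hN0 : 0 < N := by linarith
  have hmean : √(2 * L / N) ≤ 2 * √(L / m) := by
    calc √(2 * L / N) ≤ √(2 ^ 2 * (L / m)) := by
          refine Real.sqrt_le_sqrt ?_
          rw [div_le_iff₀ hN0]
          field_simp
          nlinarith
      _ = 2 * √(L / m) := by rw [Real.sqrt_mul (by norm_num), Real.sqrt_sq (by norm_num)]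
  have hinv : 1 / √N ≤ √(2 * L / N) := by
    rw [one_div, ← Real.sqrt_inv, inv_eq_one_div]
    exact Real.sqrt_le_sqrt (by gcongr; linarith)
  have := Real.sqrt_nonneg (L / m)
  calc 1 / 16 / √N + √(2 * L / N) = 1 / 16 * (1 / √N) + √(2 * L / N) := by ring
    _ ≤ 3 * √(L / m) := by linarith

namespace Execution

variable {Ω : Type} [MeasureSpace Ω] {K T Nest : ℕ}

lemma abs_est_sub_μ_le (e : Execution Ω K T Nest) {t : ℕ} {a : Fin K} {ω : Ω}
    (h : Nest ≤ pullCount e.A (e.obs t) a ω) :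
    |e.est t a ω - e.μ a|
      ≤ 1 / 16 / √(pullCount e.A (e.obs t) a ω) + |empMean e.A e.r (e.obs t) a ω - e.μ a| :=
  (abs_sub_le _ _ _).trans (add_le_add (e.est_close t a ω h).le le_rfl)

lemma A_eq_of_est_lt (e : Execution Ω K T Nest) {t : ℕ} {a : Fin K} {ω : Ω}
    (h : ∀ b ≠ a, e.est t b ω < e.est t a ω) : e.A t ω = a := by
  by_contra hne
  exact (h _ hne).not_ge (e.A_max t ω a)

lemma empMean_range (e : Execution Ω K T Nest) {M : ℕ} (a : Fin K) (ω : Ω) :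
    empMean e.A e.r (range M) a ω
      = (∑ j ∈ range (pullCount e.A (range M) a ω), e.tape a j ω)
          / pullCount e.A (range M) a ω :=
  empMean_eq_of_tape _ _ _ _ _ _ fun t ht ha => by
    rw [e.r_eq, ha, idxIn_range _ _ _ (mem_range.1 ht).le]

-- Each estimate is within `3 √(log T / m a)` of its mean.
lemma A_eq_zero_of_accurate (e : Execution Ω 2 T Nest) {t : ℕ} {ω : Ω} {m : Fin 2 → ℝ}
    (hlog : 1 ≤ log T) (hm : ∀ a, 0 < m a ∧ Nest ≤ m a / 2)
    (hacc : ∀ a, m a / 2 ≤ pullCount e.A (e.obs t) a ω ∧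
      |empMean e.A e.r (e.obs t) a ω - e.μ a| ≤ √(2 * log T / pullCount e.A (e.obs t) a ω))
    (hgap : 4 * (√(log T / m 0) + √(log T / m 1)) ≤ e.μ 0 - e.μ 1) :
    e.A t ω = 0 := by
  have hest : ∀ a, |e.est t a ω - e.μ a| ≤ 3 * √(log T / m a) := fun a =>
    (e.abs_est_sub_μ_le (by exact_mod_cast (hm a).2.trans (hacc a).1)).trans <|
      (add_le_add le_rfl (hacc a).2).trans (div_sqrt_add_sqrt_le (hm a).1 (hacc a).1 hlog)
  have hpos : ∀ a, 0 < √(log T / m a) := fun a =>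
    Real.sqrt_pos.2 (div_pos (by linarith) (hm a).1)
  refine e.A_eq_of_est_lt fun b hb => ?_
  obtain rfl : b = 1 := by omega
  linarith [abs_le.1 (hest 0), abs_le.1 (hest 1), hpos 0, hpos 1]

end Execution

lemma eventually_mul_log_le_rpow (c : ℝ) :
    ∀ᶠ x : ℝ in atTop, c * log x ≤ x ^ ((4:ℝ)/7) * log x ^ (-(1:ℝ)/7) := by
  have h := ((isLittleO_log_rpow_rpow_atTop ((8:ℝ)/7) (by norm_num : (0:ℝ) < (4:ℝ)/7))
    |>.const_mul_left c).bound one_pos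
  filter_upwards [h, eventually_gt_atTop 1] with x hx hx1
  have hl : 0 < log x := log_pos hx1
  rw [one_mul, norm_of_nonneg (rpow_nonneg (by linarith) _)] at hx
  calc c * log x = c * log x ^ ((8:ℝ)/7) * log x ^ (-(1:ℝ)/7) := by
        rw [mul_assoc, ← rpow_add hl]; norm_num
    _ ≤ x ^ ((4:ℝ)/7) * log x ^ (-(1:ℝ)/7) :=
        mul_le_mul_of_nonneg_right ((le_abs_self _).trans (le_of_eq_of_le (norm_eq_abs _).symm hx))
          (rpow_nonneg hl.le _)

lemma eventually_mul_rpow_add_one_le (L : ℕ) :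
    ∀ᶠ x : ℝ in atTop, L * (x ^ ((4:ℝ)/7) * log x ^ (-(1:ℝ)/7) + 1) ≤ x := by
  have h37 := (tendsto_rpow_atTop (by norm_num : (0:ℝ) < (3:ℝ)/7)).eventually_ge_atTop (2 * L)
  filter_upwards [h37, eventually_ge_atTop (exp 1), eventually_ge_atTop 0] with x hx hex hx0
  have hlog : 1 ≤ log x := by rwa [le_log_iff_exp_le (by linarith [exp_pos 1])]
  have h47 : 1 ≤ x ^ ((4:ℝ)/7) :=
    one_le_rpow (le_trans (one_le_exp zero_le_one) hex) (by norm_num)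
  have hlog1 : log x ^ (-(1:ℝ)/7) ≤ 1 := rpow_le_one_of_one_le_of_nonpos hlog (by norm_num)
  have hf : x ^ ((4:ℝ)/7) * log x ^ (-(1:ℝ)/7) ≤ x ^ ((4:ℝ)/7) :=
    mul_le_of_le_one_right (by positivity) hlog1
  calc L * (x ^ ((4:ℝ)/7) * log x ^ (-(1:ℝ)/7) + 1) ≤ L * (2 * x ^ ((4:ℝ)/7)) := by
        gcongr; linarith
    _ ≤ x ^ ((3:ℝ)/7) * x ^ ((4:ℝ)/7) := by nlinarith
    _ = x := by rw [← rpow_add' hx0 (by norm_num)]; norm_num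

lemma eventually_mul_log_le_T1of (c : ℝ) : ∀ᶠ T : ℕ in atTop, c * log T ≤ T1of T := by
  filter_upwards [tendsto_natCast_atTop_atTop.eventually (eventually_mul_log_le_rpow c)] with T hT
  exact hT.trans (Nat.le_ceil _)

lemma eventually_T1of_mul_le (L : ℕ) : ∀ᶠ T : ℕ in atTop, T1of T * L ≤ T := by
  filter_upwards [tendsto_natCast_atTop_atTop.eventually (eventually_mul_rpow_add_one_le L)]
    with T hT
  have hceil : (T1of T : ℝ) < (T : ℝ) ^ ((4:ℝ)/7) * log T ^ (-(1:ℝ)/7) + 1 :=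
    Nat.ceil_lt_add_one (by positivity)
  have h : (T1of T : ℝ) * L ≤ T := by nlinarith [(Nat.cast_nonneg L : (0:ℝ) ≤ L)]
  exact_mod_cast h

lemma eventually_one_le_log : ∀ᶠ T : ℕ in atTop, 1 ≤ log T :=
  (tendsto_log_atTop.comp tendsto_natCast_atTop_atTop).eventually_ge_atTop 1

lemma eventually_T1of_large {q : ℝ} (hq : 0 < q) (Nest Lfdp : ℕ) :
    ∀ᶠ T : ℕ in atTop, 0 < q * T1of T ∧ Nest ≤ q * T1of T / 2 ∧
      Lfdp * √(T1of T * log T) ≤ q * T1of T / 2 := by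
  filter_upwards [eventually_mul_log_le_T1of ((2 * Nest + 1) / q),
    eventually_mul_log_le_T1of (4 * Lfdp ^ 2 / q ^ 2), eventually_one_le_log] with T h1 h2 hlog
  have hqT : (2 * Nest + 1) * log T ≤ q * T1of T := by
    rwa [div_mul_eq_mul_div, div_le_iff₀' hq] at h1
  have hq2T : 4 * Lfdp ^ 2 * log T ≤ q ^ 2 * T1of T := by
    rwa [div_mul_eq_mul_div, div_le_iff₀' (by positivity)] at h2
  have hNest : (2 * Nest + 1 : ℝ) ≤ q * T1of T := by
    nlinarith [(Nat.cast_nonneg Nest : (0:ℝ) ≤ _)]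
  refine ⟨by linarith, by linarith, ?_⟩
  rw [← Real.sqrt_sq (by positivity : (0:ℝ) ≤ Lfdp), ← Real.sqrt_mul (by positivity)]
  refine (Real.sqrt_le_left (by linarith)).2 ?_
  nlinarith [(Nat.cast_nonneg (T1of T) : (0:ℝ) ≤ _)]

/-- large gap: assume `μ₁ ≥ μ₂` and condition on the good events
`W1–W4` of the three-level policy.  If the gap satisfies
`Δ ≥ 4·Σ_a √(log T / (q a · T1))` then all agents in the second and third levels
pull arm 1 (the best arm, index `0`). -/
theorem large_gap (Nest Lfdp : ℕ) (q : Fin 2 → ℝ) (hq0 : ∀ a, 0 < q a) :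
    ∃ T0 : ℕ, ∀ T : ℕ, T0 ≤ T →
    ∀ (Ω : Type) [MeasureSpace Ω] [IsProbabilityMeasure (volume : Measure Ω)],
    ∀ e : Execution Ω 2 T Nest,
      -- arm 1 (index 0) is the best arm
      e.μ 1 ≤ e.μ 0 →
      ThreeLevel e.obs (sigT T) (T1of T) (T2of T) Lfdp →
      (∀ (a : Fin 2) (j : ℕ), j < sigT T * T1of T →
        ∫ ω, (pullCount e.A (Finset.Ico (j * Lfdp) ((j + 1) * Lfdp)) a ω : ℝ) = q a) →
    ∀ gtape : ℕ → Fin 2 → ℕ → Ω → ℝ,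
      (∀ s < sigT T, ∀ (ω : Ω), ∀ t ∈ grp (T1of T) Lfdp s,
        e.r t ω = gtape s (e.A t ω) (idxIn e.A (grp (T1of T) Lfdp s) (e.A t ω) ω t) ω) →
    ∀ ω : Ω,
      -- event W1 at ω: concentration of per-group pull counts
      (∀ s < sigT T, ∀ a : Fin 2,
        |(pullCount e.A (grp (T1of T) Lfdp s) a ω : ℝ) - q a * T1of T|
          ≤ (Lfdp : ℝ) * Real.sqrt (T1of T * Real.log T)) →
      -- event W2 at ω: concentration of tape window averages in the first level
      (∀ s < sigT T, ∀ a : Fin 2, ∀ τ1 τ2 : ℕ, τ1 ≤ τ2 → τ2 < T →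
        |(∑ j ∈ Finset.Icc τ1 τ2, gtape s a j ω) / ((τ2 - τ1 + 1 : ℕ) : ℝ) - e.μ a|
          ≤ Real.sqrt (2 * Real.log T / ((τ2 - τ1 + 1 : ℕ) : ℝ))) →
      -- event W3 at ω: anti-concentration, each arm has a lucky first-level group
      (∀ a : Fin 2, ∃ s < sigT T,
        e.μ a + 1 / Real.sqrt (q a * T1of T) ≤
          (∑ j ∈ Finset.range ⌊q a * (T1of T : ℝ)⌋₊, gtape s a j ω) / (⌊q a * (T1of T : ℝ)⌋₊ : ℝ) ∧
        (∑ j ∈ Finset.range ⌊q (1 - a) * (T1of T : ℝ)⌋₊, gtape s (1 - a) j ω) /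
            (⌊q (1 - a) * (T1of T : ℝ)⌋₊ : ℝ)
          ≤ e.μ (1 - a) - 1 / Real.sqrt (q (1 - a) * T1of T)) →
      -- event W4 at ω: concentration of prefix empirical means over the whole run
      (∀ (a : Fin 2) (τ : ℕ), 1 ≤ τ → τ ≤ pullCount e.A (Finset.range T) a ω →
        |(∑ j ∈ Finset.range τ, e.tape a j ω) / (τ : ℝ) - e.μ a|
          ≤ Real.sqrt (2 * Real.log T / (τ : ℝ))) →
      -- large gap
      4 * (Real.sqrt (Real.log T / (q 0 * T1of T)) + Real.sqrt (Real.log T / (q 1 * T1of T)))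
          ≤ e.μ 0 - e.μ 1 →
      -- all agents of the second and third levels pull arm 1
      ∀ t : ℕ, sigT T * T1of T * Lfdp ≤ t → t < T → e.A t ω = 0 := by
  obtain ⟨T0, hT0⟩ := eventually_atTop.1 <| eventually_one_le_log.and <|
    (eventually_T1of_mul_le Lfdp).and <|
      eventually_all.2 fun a => eventually_T1of_large (hq0 a) Nest Lfdp
  refine ⟨T0, fun T hT Ω _ _ e _ hTL _ gtape hgt ω hW1 hW2 _ hW4 hgap t ht htT => ?_⟩
  obtain ⟨hlog, hLT, hq⟩ := hT0 T hT
  refine e.A_eq_zero_of_accurate hlog (fun a => ⟨(hq a).1, (hq a).2.1⟩) (fun a => ?_) hgap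
  have hgrp : ∀ s < sigT T, q a * T1of T / 2 ≤ pullCount e.A (grp (T1of T) Lfdp s) a ω :=
    fun s hs => by linarith [(abs_le.1 (hW1 s hs a)).1, (hq a).2.2]
  have hpos : ∀ S, q a * T1of T / 2 ≤ pullCount e.A S a ω → 0 < pullCount e.A S a ω :=
    fun S h => (Nat.cast_pos (α := ℝ)).1 (by linarith [(hq a).1])
  rcases lt_or_ge t (sigT T * T1of T * Lfdp + sigT T * T2of T) with h2 | h3
  · obtain ⟨s, hs, hts⟩ := exists_mem_Ico_add_mul ht h2
    rw [hTL.2.1 s hs t hts, empMean_eq_of_tape _ _ _ _ _ (gtape s a · ω) fun t' ht' ha => by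
      rw [hgt s hs ω t' ht', ha]]
    exact ⟨hgrp s hs, abs_avg_range_sub_le (hW2 s hs a) (hpos _ (hgrp s hs))
      ((card_grp (T1of T) Lfdp s ▸ card_filter_le _ _).trans hLT)⟩
  · have hσ := sigT_pos (T := T) (by linarith)
    have hgrp0 : grp (T1of T) Lfdp 0 ⊆ range (sigT T * T1of T * Lfdp + sigT T * T2of T) :=
      (grp_subset_range hσ).trans (range_subset_range.2 (Nat.le_add_right _ _))
    have hN := (hgrp 0 hσ).trans (Nat.cast_le.2 (pullCount_mono e.A a ω hgrp0))
    rw [hTL.2.2 t h3, e.empMean_range]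
    exact ⟨hN, hW4 a _ (hpos _ hN) (pullCount_mono e.A a ω (range_subset_range.2 (by omega)))⟩

end IncExp
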